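/- arXiv:1304.5388 — 13 statements merged into one kernel-verified Lean document; each statement's English description precedes it below -/
import Mathlib

section
/- A Boolean relation R ⊆ {0,1}^k is Horn (definable by a CNF formula in which every clause has at most one positive literal) if and only if R is closed under coordinatewise conjunction, i.e., for all m, m' ∈ R, the tuple m ∧ m' (taking AND in each coordinate) is in R. -/
/-- Satisfaction of a clause with positive literals `P` and negative literals `N`. -/
def clauseSat {k : ℕ} (P N : Finset (Fin k)) (m : Fin k → Bool) : Prop :=
  (∃ i ∈ P, m i = true) ∨ (∃ i ∈ N, m i = false)

/-- `R` is definable by a CNF formula in which every clause has at most one positive literal. -/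
def HornDefinable {k : ℕ} (R : Set (Fin k → Bool)) : Prop :=
  ∃ L : List (Finset (Fin k) × Finset (Fin k)),
    (∀ c ∈ L, c.1.card ≤ 1) ∧
    R = {m | ∀ c ∈ L, clauseSat c.1 c.2 m}

/-!
A Horn clause has at most one positive literal, so the set of its models is closed under
coordinatewise conjunction, and so is every intersection of such sets. Conversely, let `R` be
closed under conjunction and `a ∉ R`. If no member of `R` lies above `a`, the purely negative
clause `¬⋀_{a i = 1} x_i` holds on `R` and fails at `a`. Otherwise the meet `c` of all members
of `R` above `a` lies in `R`, hence `c ≠ a`, so `c j = 1` for some `j` with `a j = 0`; the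
clause `⋀_{a i = 1} x_i → x_j` then holds on `R` and fails at `a`. The conjunction of all Horn
clauses valid on `R` therefore defines `R`.
-/

theorem infClosed_iff_forall_and_mem {ι : Type*} {R : Set (ι → Bool)} :
    InfClosed R ↔ ∀ m m', m ∈ R → m' ∈ R → (fun i => m i && m' i) ∈ R :=
  ⟨fun h _ _ hm hm' => h hm hm', fun h m hm m' hm' => h m m' hm hm'⟩

theorem infClosed_setOf_clauseSat {k : ℕ} {P : Finset (Fin k)} (N : Finset (Fin k))
    (hP : P.card ≤ 1) : InfClosed {m | clauseSat P N m} := by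
  rintro m (⟨i, hi, hmi⟩ | ⟨i, hi, hmi⟩) m' (⟨j, hj, hmj⟩ | ⟨j, hj, hmj⟩)
  · obtain rfl : i = j := Finset.card_le_one.1 hP i hi j hj
    exact Or.inl ⟨i, hi, by simp [hmi, hmj]⟩
  all_goals first
    | exact Or.inr ⟨i, hi, by simp [hmi]⟩
    | exact Or.inr ⟨j, hj, by simp [hmj]⟩

theorem HornDefinable.infClosed {k : ℕ} {R : Set (Fin k → Bool)} (hR : HornDefinable R) :
    InfClosed R := by
  obtain ⟨L, hL, rfl⟩ := hR
  exact fun m hm m' hm' c hc => infClosed_setOf_clauseSat c.2 (hL c hc) (hm c hc) (hm' c hc)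

theorem clauseSat_of_not_le {k : ℕ} {P : Finset (Fin k)} {a m : Fin k → Bool} (h : ¬ a ≤ m) :
    clauseSat P {i | a i = true} m := by
  obtain ⟨i, hi⟩ := not_forall.1 (Pi.le_def.not.1 h)
  obtain ⟨hmi, hai⟩ := Bool.lt_iff.1 (not_le.1 hi)
  exact Or.inr ⟨i, by simpa using hai, hmi⟩

theorem not_clauseSat_self {k : ℕ} {P : Finset (Fin k)} {a : Fin k → Bool}
    (hP : ∀ i ∈ P, a i = false) : ¬ clauseSat P {i | a i = true} a := by
  rintro (⟨i, hi, hai⟩ | ⟨i, hi, hai⟩) <;> simp_all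

theorem InfClosed.exists_eq_false_forall_le_eq_true {ι : Type*} [Finite ι] {R : Set (ι → Bool)}
    (hR : InfClosed R) {a : ι → Bool} (ha : a ∉ R) (hne : ∃ m ∈ R, a ≤ m) :
    ∃ j, a j = false ∧ ∀ m ∈ R, a ≤ m → m j = true := by
  set c := sInf {m | m ∈ R ∧ a ≤ m}
  have hcR : c ∈ R := hR.sInf_mem_of_nonempty (Set.toFinite _) hne fun m hm => hm.1
  have hac : a < c := (le_sInf fun m hm => hm.2).lt_of_ne fun h => ha (h ▸ hcR)
  obtain ⟨-, j, hj⟩ := Pi.lt_def.1 hac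
  obtain ⟨haj, hcj⟩ := Bool.lt_iff.1 hj
  refine ⟨j, haj, fun m hm ham => ?_⟩
  have hcm : c j ≤ m j := (sInf_le ⟨hm, ham⟩ : c ≤ m) j
  exact Bool.le_iff_imp.1 hcm hcj

theorem InfClosed.exists_hornClause_separating {k : ℕ} {R : Set (Fin k → Bool)}
    (hR : InfClosed R) {a : Fin k → Bool} (ha : a ∉ R) :
    ∃ P N : Finset (Fin k), P.card ≤ 1 ∧ (∀ m ∈ R, clauseSat P N m) ∧ ¬ clauseSat P N a := by
  by_cases hne : ∃ m ∈ R, a ≤ m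
  · obtain ⟨j, haj, hforced⟩ := hR.exists_eq_false_forall_le_eq_true ha hne
    refine ⟨{j}, ({i | a i = true} : Finset _), by simp, fun m hm => ?_,
      not_clauseSat_self (by simpa using haj)⟩
    by_cases ham : a ≤ m
    · exact Or.inl ⟨j, Finset.mem_singleton_self j, hforced m hm ham⟩
    · exact clauseSat_of_not_le ham
  · push Not at hne
    exact ⟨∅, ({i | a i = true} : Finset _), by simp, fun m hm => clauseSat_of_not_le (hne m hm),
      not_clauseSat_self (by simp)⟩

theorem InfClosed.hornDefinable {k : ℕ} {R : Set (Fin k → Bool)} (hR : InfClosed R) :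
    HornDefinable R := by
  classical
  refine ⟨({c : Finset (Fin k) × Finset (Fin k) | c.1.card ≤ 1 ∧
    ∀ m ∈ R, clauseSat c.1 c.2 m} : Finset _).toList, fun c hc => by simp_all, ?_⟩
  ext a
  simp only [Finset.mem_toList, Finset.mem_filter, Finset.mem_univ, true_and, Set.mem_ofPred_eq]
  refine ⟨fun ha c hc => hc.2 a ha, fun h => ?_⟩
  by_contra ha
  obtain ⟨P, N, hP, hRPN, hPNa⟩ := hR.exists_hornClause_separating ha
  exact hPNa (h (P, N) ⟨hP, hRPN⟩)

theorem stmt0 {k : ℕ} (R : Set (Fin k → Bool)) :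
    HornDefinable R ↔ ∀ m m', m ∈ R → m' ∈ R → (fun i => m i && m' i) ∈ R := by
  rw [← infClosed_iff_forall_and_mem]
  exact ⟨HornDefinable.infClosed, InfClosed.hornDefinable⟩
end

section
/- Let R ⊆ {0,1}^k be a nontrivial Boolean relation (R ≠ ∅ and R ≠ {0,1}^k) that is both 0-valid and 1-valid (contains the all-zeros and all-ones tuples). Then the equality relation {(x,y) ∈ {0,1}^2 : x = y} can be expressed as a conjunction of R-constraints (with repeated variables allowed) without existential quantification and without the equality relation; concretely, there exist substitutions of the two variables x,y for the k coordinate positions such that the conjunction of the resulting R-constraints has exactly {(0,0),(1,1)} as its set of satisfying assignments. -/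
/- An `R`-constraint over the two variables `x = 0`, `y = 1` is given by a substitution
`s : Fin k → Fin 2`; an assignment `a : Fin 2 → Bool` satisfies it iff `a ∘ s ∈ R`.
A conjunction of such constraints is given by a list of substitutions. -/
theorem stmt2 {k : ℕ} (R : Set (Fin k → Bool))
    (hne : R ≠ ∅) (hnu : R ≠ Set.univ)
    (h0 : (fun _ => false) ∈ R) (h1 : (fun _ => true) ∈ R) :
    ∃ L : List (Fin k → Fin 2),
      {a : Fin 2 → Bool | ∀ s ∈ L, (fun i => a (s i)) ∈ R} =
        {a : Fin 2 → Bool | a 0 = a 1} := by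
  obtain ⟨t, ht⟩ : ∃ t, t ∉ R := by
    by_contra h; push_neg at h; exact hnu (Set.eq_univ_of_forall h)
  refine ⟨[fun i => if t i then 1 else 0, fun i => if t i then 0 else 1], ?_⟩
  ext a
  simp only [Set.mem_setOf_eq, List.mem_cons, List.not_mem_nil, or_false,
    List.mem_singleton, forall_eq_or_imp, forall_eq]
  constructor
  · rintro ⟨hA, hB⟩
    by_contra hne2
    cases ha0 : a 0 <;> cases ha1 : a 1
    · exact hne2 (ha0.trans ha1.symm)
    · apply ht
      have : (fun i => a (if t i then (1 : Fin 2) else 0)) = t := by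
        funext i; cases hti : t i <;> simp [hti, ha0, ha1]
      rwa [this] at hA
    · apply ht
      have : (fun i => a (if t i then (0 : Fin 2) else 1)) = t := by
        funext i; cases hti : t i <;> simp [hti, ha0, ha1]
      rwa [this] at hB
    · exact hne2 (ha0.trans ha1.symm)
  · intro heq
    have hconst : ∀ s : Fin k → Fin 2, (fun i => a (s i)) = (fun _ => a 0) := by
      intro s; funext i
      have h : s i = 0 ∨ s i = 1 := by omega
      rcases h with h | h <;> simp [h, heq]
    constructor <;> rw [hconst] <;> cases h : a 0 <;> simp_all
end

section
/- Let R ⊆ {0,1}^k be a Boolean relation that is complementive (closed under taking the pointwise complement of tuples) but neither 0-valid nor 1-valid. Then the binary disequality relation {(0,1),(1,0)} can be expressed as a conjunction of R-constraints over two variables x, y (without quantifiers or equality). -/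
/- `R` is a (nontrivial, hence nonempty) complementive relation that is neither 0-valid
nor 1-valid; then disequality is expressible as a conjunction of `R`-constraints over
the two variables `x = 0`, `y = 1` (each given by a substitution `s : Fin k → Fin 2`). -/
theorem stmt3 {k : ℕ} (R : Set (Fin k → Bool)) (hne : R.Nonempty)
    (hcomp : ∀ m ∈ R, (fun i => !(m i)) ∈ R)
    (h0 : (fun _ => false) ∉ R) (h1 : (fun _ => true) ∉ R) :
    ∃ L : List (Fin k → Fin 2),
      {a : Fin 2 → Bool | ∀ s ∈ L, (fun i => a (s i)) ∈ R} =
        {a : Fin 2 → Bool | a 0 ≠ a 1} := by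
  obtain ⟨m, hm⟩ := hne
  refine ⟨[fun i => if m i then 1 else 0], ?_⟩
  ext a
  simp only [Set.mem_setOf_eq, List.mem_singleton, forall_eq]
  constructor
  · intro h heq
    have hconst : (fun i => a (if m i then 1 else 0)) = fun _ => a 0 := by
      funext i
      by_cases hmi : m i <;> simp [hmi, heq.symm]
    rw [hconst] at h
    cases ha : a 0 with
    | false => rw [ha] at h; exact h0 h
    | true => rw [ha] at h; exact h1 h
  · intro hab
    cases ha0 : a 0 with
    | false =>
      have ha1 : a 1 = true := by
        cases h1' : a 1 with
        | false => exact absurd (ha0.trans h1'.symm) hab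
        | true => rfl
      have : (fun i => a (if m i then 1 else 0)) = m := by
        funext i; by_cases hmi : m i <;> simp [hmi, ha0, ha1]
      rw [this]; exact hm
    | true =>
      have ha1 : a 1 = false := by
        cases h1' : a 1 with
        | false => rfl
        | true => exact absurd (ha0.trans h1'.symm) hab
      have : (fun i => a (if m i then 1 else 0)) = fun i => !(m i) := by
        funext i; by_cases hmi : m i <;> simp [hmi, ha0, ha1]
      rw [this]; exact hcomp m hm
end

section
/- Let R ⊆ {0,1}^k be a nontrivial Boolean relation that is both 0-valid and 1-valid but not complementive. Then the implication relation {(0,0),(0,1),(1,1)} on two variables can be expressed as a conjunction of R-constraints (without quantifiers or equality). -/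
/- `R` nontrivial, 0-valid, 1-valid, not complementive; then the implication relation
{(0,0),(0,1),(1,1)} is expressible as a conjunction of `R`-constraints over the two
variables `x = 0`, `y = 1` (each given by a substitution `s : Fin k → Fin 2`). -/
theorem stmt4 {k : ℕ} (R : Set (Fin k → Bool))
    (hne : R ≠ ∅) (hnu : R ≠ Set.univ)
    (h0 : (fun _ => false) ∈ R) (h1 : (fun _ => true) ∈ R)
    (hcomp : ¬ ∀ m ∈ R, (fun i => !(m i)) ∈ R) :
    ∃ L : List (Fin k → Fin 2),
      {a : Fin 2 → Bool | ∀ s ∈ L, (fun i => a (s i)) ∈ R} =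
        {a : Fin 2 → Bool | a 0 = true → a 1 = true} := by
  push_neg at hcomp
  obtain ⟨m, hm, hm'⟩ := hcomp
  refine ⟨[fun i => if m i then 1 else 0], ?_⟩
  ext a
  simp only [Set.mem_setOf_eq, List.mem_singleton, forall_eq]
  constructor
  · intro h h0a
    by_contra h1a
    apply hm'
    convert h using 2 with i
    by_cases hmi : m i <;>
      simp only [Bool.not_eq_true] at h1a <;> simp [hmi, h0a, h1a]
  · intro h
    by_cases h0a : a 0 = true
    · have h1a := h h0a
      convert h1 using 2 with i
      by_cases hmi : m i <;> simp [hmi, h0a, h1a]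
    · simp only [Bool.not_eq_true] at h0a
      by_cases h1a : a 1 = true
      · convert hm using 2 with i
        by_cases hmi : m i <;> simp [hmi, h0a, h1a]
      · simp only [Bool.not_eq_true] at h1a
        convert h0 using 2 with i
        by_cases hmi : m i <;> simp [hmi, h0a, h1a]
end

section
/- Let R ⊆ {0,1}^k be a Boolean relation that is neither complementive, nor 0-valid, nor 1-valid. Then the relation {(1,0)} (i.e., x ∧ ¬y) on two variables can be expressed as a conjunction of R-constraints (without quantifiers or equality). -/
/- `R` neither complementive, nor 0-valid, nor 1-valid; then {(1,0)} (i.e. x ∧ ¬y)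
is expressible as a conjunction of `R`-constraints over the two variables
`x = 0`, `y = 1` (each given by a substitution `s : Fin k → Fin 2`). -/
theorem stmt5 {k : ℕ} (R : Set (Fin k → Bool))
    (hcomp : ¬ ∀ m ∈ R, (fun i => !(m i)) ∈ R)
    (h0 : (fun _ => false) ∉ R) (h1 : (fun _ => true) ∉ R) :
    ∃ L : List (Fin k → Fin 2),
      {a : Fin 2 → Bool | ∀ s ∈ L, (fun i => a (s i)) ∈ R} =
        {a : Fin 2 → Bool | a 0 = true ∧ a 1 = false} := by
  push_neg at hcomp
  obtain ⟨m, hm, hm'⟩ := hcomp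
  refine ⟨[fun i => if m i then 0 else 1], ?_⟩
  ext a
  simp only [Set.mem_setOf_eq, List.mem_singleton, forall_eq]
  constructor
  · intro h
    rcases Bool.eq_false_or_eq_true (a 0) with h0a | h0a <;>
      rcases Bool.eq_false_or_eq_true (a 1) with h1a | h1a
    · exact absurd h (by
        have : (fun i => a (if m i then (0 : Fin 2) else 1)) = fun _ => true := by
          funext i; by_cases hmi : m i <;> simp [hmi, h0a, h1a]
        rw [this]; exact h1)
    · exact ⟨h0a, h1a⟩
    · exact absurd h (by
        have : (fun i => a (if m i then (0 : Fin 2) else 1)) = fun i => !(m i) := by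
          funext i; by_cases hmi : m i <;> simp [hmi, h0a, h1a]
        rw [this]; exact hm')
    · exact absurd h (by
        have : (fun i => a (if m i then (0 : Fin 2) else 1)) = fun _ => false := by
          funext i; by_cases hmi : m i <;> simp [hmi, h0a, h1a]
        rw [this]; exact h0)
  · rintro ⟨ha0, ha1⟩
    have : (fun i => a (if m i then (0 : Fin 2) else 1)) = m := by
      funext i; by_cases hmi : m i <;> simp [hmi, ha0, ha1]
    rw [this]; exact hm
end

section
/- The smallest set of Boolean relations containing all positive relations and the equality relation, and closed under primitive positive first-order definitions, consists exactly of the relations R such that for all m, m' ∈ R, the coordinatewise implication m → m' (with i-th coordinate (¬m_i) ∨ m'_i) is also in R. -/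
abbrev BRel (k : ℕ) := Set (Fin k → Bool)

/-- A family of Boolean relations, one set per arity. -/
abbrev RelFamily := ∀ k : ℕ, Set (BRel k)

/-- `R` is positive: definable by a CNF formula whose clauses contain only positive literals. -/
def PositiveRel {k : ℕ} (R : BRel k) : Prop :=
  ∃ L : List (Finset (Fin k)), R = {m | ∀ c ∈ L, ∃ i ∈ c, m i = true}

/-- The binary equality relation. -/
def eqRel : BRel 2 := {m | m 0 = m 1}

/-- `R` (of arity `n`) has a primitive positive definition from the relations in `C`
(together with equality): `R(x₁,...,xₙ) ≡ ∃ y₁ ... y_l φ`, where `φ` is a conjunction of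
constraints using relations from `C` (the list `L`, each with a substitution of the
`n + l` variables into its coordinates) and equality constraints (the list `E`). -/
def ppDefinable (C : RelFamily) {n : ℕ} (R : BRel n) : Prop :=
  ∃ (l : ℕ) (L : List (Σ k : ℕ, BRel k × (Fin k → Fin (n + l))))
    (E : List (Fin (n + l) × Fin (n + l))),
    (∀ c ∈ L, c.2.1 ∈ C c.1) ∧
    R = {m | ∃ y : Fin l → Bool,
          (∀ c ∈ L, (fun i => Fin.append m y (c.2.2 i)) ∈ c.2.1) ∧
          (∀ e ∈ E, Fin.append m y e.1 = Fin.append m y e.2)}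

lemma append_zero_apply {n : ℕ} (m : Fin n → Bool) (y : Fin 0 → Bool) (i : Fin (n+0)) :
    Fin.append m y i = m i := Fin.append_left m y i

lemma imp_append {n l : ℕ} (m m' : Fin n → Bool) (y y' : Fin l → Bool) :
    (fun j : Fin (n+l) => !(Fin.append m y j) || Fin.append m' y' j) =
    Fin.append (fun i => !(m i) || m' i) (fun i => !(y i) || y' i) := by
  funext j
  induction j using Fin.addCases with
  | left i => simp
  | right i => simp

lemma keyLemma {n : ℕ} (R : BRel n)
    (hcl : ∀ m m', m ∈ R → m' ∈ R → (fun i => !(m i) || m' i) ∈ R)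
    (t : Fin n → Bool)
    (ht1 : ∀ c : Finset (Fin n), (∀ m ∈ R, ∃ i ∈ c, m i = true) → ∃ i ∈ c, t i = true)
    (ht2 : ∀ i j : Fin n, (∀ m ∈ R, m i = m j) → t i = t j) :
    t ∈ R := by
  classical
  have hor : ∀ m m', m ∈ R → m' ∈ R → (fun i => m i || m' i) ∈ R := by
    intro m m' hm hm'
    have h := hcl _ _ (hcl m m' hm hm') hm'
    have he : (fun i => !((fun i => !(m i) || m' i) i) || m' i) = (fun i => m i || m' i) := by
      funext i
      show (!(!(m i) || m' i) || m' i) = (m i || m' i)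
      cases m i <;> cases m' i <;> rfl
    rwa [he] at h
  -- a minimal element below t
  have hm0 : ∃ m ∈ R, ∀ i, t i = false → m i = false := by
    by_contra h
    push_neg at h
    have hv : ∀ m ∈ R, ∃ i ∈ Finset.univ.filter (fun i => t i = false), m i = true := by
      intro m hm
      obtain ⟨i, h1, h2⟩ := h m hm
      exact ⟨i, by simp [h1], by simpa using h2⟩
    obtain ⟨i, hi, hti⟩ := ht1 _ hv
    simp only [Finset.mem_filter, Finset.mem_univ, true_and] at hi
    rw [hi] at hti; cases hti
  obtain ⟨m₀, hm₀R, hm₀⟩ := hm0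
  -- Lemma A
  have lemA : ∀ j : Fin n, t j = true →
      ∃ w ∈ R, (∀ i, t i = false → w i = false) ∧ w j = true := by
    intro j htj
    by_cases hall : ∀ m ∈ R, m j = true
    · exact ⟨m₀, hm₀R, hm₀, hall m₀ hm₀R⟩
    · push_neg at hall
      obtain ⟨x₀, hx₀R, hx₀⟩ := hall
      simp only [ne_eq, Bool.not_eq_true] at hx₀
      have ind : ∀ s : Finset (Fin n),
          ∃ u ∈ R, u j = false ∧ ∀ i ∈ s, t i = false → u i = true := by
        intro s
        induction s using Finset.induction_on with
        | empty => exact ⟨x₀, hx₀R, hx₀, by simp⟩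
        | @insert a s ha ih =>
          obtain ⟨u, huR, huj, hus⟩ := ih
          by_cases hta : t a = true
          · refine ⟨u, huR, huj, ?_⟩
            intro i hi hti
            rcases Finset.mem_insert.1 hi with rfl | hi'
            · rw [hta] at hti; cases hti
            · exact hus i hi' hti
          · simp only [Bool.not_eq_true] at hta
            have hne : ∃ m ∈ R, m a ≠ m j := by
              by_contra h; push_neg at h
              have := ht2 a j h
              rw [hta, htj] at this; cases this
            obtain ⟨m, hmR, hmaj⟩ := hne
            cases hma : m a with
            | true =>
              have hmj : m j = false := by
                cases hmj : m j
                · rfl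
                · rw [hma, hmj] at hmaj; exact absurd rfl hmaj
              refine ⟨fun i => u i || m i, hor u m huR hmR, by simp [huj, hmj], ?_⟩
              intro i hi hti
              rcases Finset.mem_insert.1 hi with rfl | hi'
              · simp [hma]
              · simp [hus i hi' hti]
            | false =>
              have hmj : m j = true := by
                cases hmj : m j
                · rw [hma, hmj] at hmaj; exact absurd rfl hmaj
                · rfl
              refine ⟨fun i => !(m i) || u i, hcl m u hmR huR, by simp [hmj, huj], ?_⟩
              intro i hi hti
              rcases Finset.mem_insert.1 hi with rfl | hi'
              · simp [hma]
              · simp [hus i hi' hti]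
      obtain ⟨u, huR, huj, hus⟩ := ind Finset.univ
      refine ⟨fun i => !(u i) || m₀ i, hcl u m₀ huR hm₀R, ?_, by simp [huj]⟩
      intro i hti
      simp [hus i (Finset.mem_univ i) hti, hm₀ i hti]
  -- assemble t as a join
  have ind2 : ∀ s : Finset (Fin n),
      ∃ w ∈ R, (∀ i, t i = false → w i = false) ∧ ∀ j ∈ s, t j = true → w j = true := by
    intro s
    induction s using Finset.induction_on with
    | empty => exact ⟨m₀, hm₀R, hm₀, by simp⟩
    | @insert a s ha ih =>
      obtain ⟨w, hwR, hw0, hw1⟩ := ih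
      by_cases hta : t a = true
      · obtain ⟨wa, hwaR, hwa0, hwaj⟩ := lemA a hta
        refine ⟨fun i => w i || wa i, hor _ _ hwR hwaR, ?_, ?_⟩
        · intro i hti; simp [hw0 i hti, hwa0 i hti]
        · intro jj hjj htjj
          rcases Finset.mem_insert.1 hjj with rfl | hj'
          · simp [hwaj]
          · simp [hw1 jj hj' htjj]
      · refine ⟨w, hwR, hw0, ?_⟩
        intro jj hjj htjj
        rcases Finset.mem_insert.1 hjj with rfl | hj'
        · exact absurd htjj hta
        · exact hw1 jj hj' htjj
  obtain ⟨w, hwR, hw0, hw1⟩ := ind2 Finset.univ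
  have hwt : t = w := by
    funext i
    cases hti : t i
    · exact (hw0 i hti).symm
    · exact (hw1 i (Finset.mem_univ i) hti).symm
  rw [hwt]; exact hwR

/-- A relation belongs to every family containing all positive relations and equality and
closed under primitive positive definitions iff it is closed under coordinatewise
implication. -/
theorem stmt7 (n : ℕ) (R : BRel n) :
    (∀ C : RelFamily,
        (∀ (k : ℕ) (S : BRel k), PositiveRel S → S ∈ C k) →
        eqRel ∈ C 2 →
        (∀ (k : ℕ) (S : BRel k), ppDefinable C S → S ∈ C k) →
        R ∈ C n)
    ↔ ∀ m m', m ∈ R → m' ∈ R → (fun i => !(m i) || m' i) ∈ R := by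
  constructor
  · intro h
    refine h (fun k => {S : BRel k | ∀ m m', m ∈ S → m' ∈ S → (fun i => !(m i) || m' i) ∈ S})
      ?_ ?_ ?_
    · rintro k S ⟨L, rfl⟩ m m' hm hm' c hc
      obtain ⟨i, hic, hi⟩ := hm' c hc
      exact ⟨i, hic, by simp [hi]⟩
    · intro m m' hm hm'
      simp only [eqRel, Set.mem_setOf_eq] at hm hm' ⊢
      rw [hm, hm']
    · rintro k S ⟨l, L, E, hLC, rfl⟩ m m' hm hm'
      obtain ⟨y, hLy, hEy⟩ := hm
      obtain ⟨y', hLy', hEy'⟩ := hm'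
      refine ⟨fun i => !(y i) || y' i, ?_, ?_⟩
      · intro c hc
        have key : (fun i => Fin.append (fun i => !(m i) || m' i) (fun i => !(y i) || y' i) (c.2.2 i))
            = (fun i => !((fun i => Fin.append m y (c.2.2 i)) i) || (fun i => Fin.append m' y' (c.2.2 i)) i) := by
          funext i
          exact (congrFun (imp_append m m' y y') (c.2.2 i)).symm
        rw [key]
        exact hLC c hc _ _ (hLy c hc) (hLy' c hc)
      · intro e he
        rw [← congrFun (imp_append m m' y y') e.1, ← congrFun (imp_append m m' y y') e.2,
          hEy e he, hEy' e he]
  · intro hcl C hpos heq hpp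
    classical
    obtain ⟨Lc, hLcmem⟩ : ∃ Lc : List (Finset (Fin n)),
        ∀ c, c ∈ Lc ↔ (∀ m ∈ R, ∃ i ∈ c, m i = true) :=
      ⟨(Finset.univ.filter (fun c : Finset (Fin n) => ∀ m ∈ R, ∃ i ∈ c, m i = true)).toList,
        fun c => by simp⟩
    obtain ⟨El, hElmem⟩ : ∃ El : List (Fin (n+0) × Fin (n+0)),
        ∀ e, e ∈ El ↔ (∀ x ∈ R, x e.1 = x e.2) :=
      ⟨(Finset.univ.filter (fun e : Fin (n+0) × Fin (n+0) => ∀ x ∈ R, x e.1 = x e.2)).toList,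
        fun e => by simp⟩
    refine hpp n R ⟨0, [⟨n, ({m | ∀ c ∈ Lc, ∃ i ∈ c, m i = true}, Fin.castAdd 0)⟩], El, ?_, ?_⟩
    · intro c hc
      rw [List.mem_singleton] at hc
      subst hc
      exact hpos n _ ⟨Lc, rfl⟩
    · ext m
      constructor
      · intro hm
        refine ⟨fun i => i.elim0, ?_, ?_⟩
        · intro c hc
          rw [List.mem_singleton] at hc
          subst hc
          show (fun i => Fin.append m (fun i => i.elim0) (Fin.castAdd 0 i)) ∈
            {m | ∀ c ∈ Lc, ∃ i ∈ c, m i = true}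
          have he : (fun i => Fin.append m (fun i => i.elim0) (Fin.castAdd 0 i)) = m := by
            funext i; exact Fin.append_left m _ i
          rw [he]
          intro c hc
          exact (hLcmem c).1 hc m hm
        · intro e he
          rw [append_zero_apply, append_zero_apply]
          exact (hElmem e).1 he m hm
      · rintro ⟨y, hL, hE⟩
        refine keyLemma R hcl m ?_ ?_
        · intro c hvc
          have h1 := hL _ (List.mem_singleton_self _)
          have he : (fun i => Fin.append m y (Fin.castAdd 0 i)) = m := by
            funext i; exact Fin.append_left m _ i
          rw [he] at h1
          exact h1 c ((hLcmem c).2 hvc)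
        · intro i j hij
          have h1 := hE (i, j) ((hElmem (i, j)).2 hij)
          rwa [append_zero_apply, append_zero_apply] at h1
end

section
/- Let a and b be positive CNF formulae (every clause contains only positive literals) and let γ be a positive clause (a disjunction of variables). If a does not entail γ and b does not entail γ, then the conjunction a ∧ b does not entail γ. -/
/-- Satisfaction of a positive CNF formula, represented as a list of positive clauses
(each a finite set of variables). -/
def satCNF (a : List (Finset ℕ)) (v : ℕ → Bool) : Prop :=
  ∀ c ∈ a, ∃ x ∈ c, v x = true

theorem stmt8 (a b : List (Finset ℕ)) (γ : Finset ℕ)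
    (ha : ¬ ∀ v : ℕ → Bool, satCNF a v → ∃ x ∈ γ, v x = true)
    (hb : ¬ ∀ v : ℕ → Bool, satCNF b v → ∃ x ∈ γ, v x = true) :
    ¬ ∀ v : ℕ → Bool, satCNF a v ∧ satCNF b v → ∃ x ∈ γ, v x = true := by
  push_neg at ha hb ⊢
  obtain ⟨va, hva, hga⟩ := ha
  obtain ⟨vb, hvb, hgb⟩ := hb
  refine ⟨fun x => va x || vb x, ⟨?_, ?_⟩, ?_⟩
  · intro c hc
    obtain ⟨x, hx, hvx⟩ := hva c hc
    exact ⟨x, hx, by simp [hvx]⟩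
  · intro c hc
    obtain ⟨x, hx, hvx⟩ := hvb c hc
    exact ⟨x, hx, by simp [hvx]⟩
  · intro x hx
    simp [hga x hx, hgb x hx]
end

section
/- Let Δ be a finite set of positive CNF formulae, ψ ∈ Δ, and α = ⋀_{i∈I} C_i a positive CNF formula with positive clauses C_i. Then there exists a minimal support Φ ⊆ Δ for α with ψ ∈ Φ (i.e., Φ is consistent, Φ ⊨ α, no proper subset of Φ entails α, and ψ ∈ Φ) if and only if there exists some i ∈ I such that the set Δ_i := {ψ} ∪ {δ ∈ Δ : δ ⊭ C_i} entails α. -/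
/-- Entailment of a formula `α` by a set `S` of formulae. -/
def entailsCNF (S : Set (List (Finset ℕ))) (α : List (Finset ℕ)) : Prop :=
  ∀ v : ℕ → Bool, (∀ δ ∈ S, satCNF δ v) → satCNF α v

def entailsClause (δ : List (Finset ℕ)) (Cl : Finset ℕ) : Prop :=
  ∀ v : ℕ → Bool, satCNF δ v → ∃ x ∈ Cl, v x = true

/-- The set `Δ_Cl` of the informal statement. -/
def clauseSupport (Δ : Finset (List (Finset ℕ))) (ψ : List (Finset ℕ)) (Cl : Finset ℕ) :
    Set (List (Finset ℕ)) :=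
  {ψ} ∪ {δ | δ ∈ Δ ∧ ¬ entailsClause δ Cl}

lemma satCNF_mono {a : List (Finset ℕ)} {v w : ℕ → Bool}
    (hvw : ∀ x, v x = true → w x = true) (ha : satCNF a v) : satCNF a w := fun c hc =>
  let ⟨x, hx, hvx⟩ := ha c hc
  ⟨x, hx, hvw x hvx⟩

lemma satCNF_const_true {a : List (Finset ℕ)} (ha : ∀ c ∈ a, c.Nonempty) :
    satCNF a fun _ => true := fun c hc =>
  let ⟨x, hx⟩ := ha c hc
  ⟨x, hx, rfl⟩

lemma entailsCNF.mono {S T : Set (List (Finset ℕ))} {α : List (Finset ℕ)}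
    (hST : S ⊆ T) (h : entailsCNF S α) : entailsCNF T α := fun v hv =>
  h v fun δ hδ => hv δ (hST hδ)

lemma not_entailsClause_iff {δ : List (Finset ℕ)} {Cl : Finset ℕ} :
    ¬ entailsClause δ Cl ↔ ∃ v : ℕ → Bool, satCNF δ v ∧ ∀ x ∈ Cl, v x = false := by
  simp [entailsClause]

lemma exists_clause_of_not_entailsCNF {S : Set (List (Finset ℕ))} {α : List (Finset ℕ)}
    (h : ¬ entailsCNF S α) : ∃ Cl ∈ α, ∀ δ ∈ S, ¬ entailsClause δ Cl := by
  simp only [entailsCNF, satCNF, not_forall, not_exists, not_and] at h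
  obtain ⟨v, hv, Cl, hCl, hvCl⟩ := h
  exact ⟨Cl, hCl, fun δ hδ hδCl =>
    let ⟨x, hx, hvx⟩ := hδCl v (hv δ hδ)
    hvCl x hx hvx⟩

lemma not_entailsCNF_of_forall_not_entailsClause {S : Set (List (Finset ℕ))}
    {α : List (Finset ℕ)} {Cl : Finset ℕ} (hCl : Cl ∈ α)
    (h : ∀ δ ∈ S, ¬ entailsClause δ Cl) : ¬ entailsCNF S α := by
  classical
  simp only [not_entailsClause_iff] at h
  choose! w hw using h
  let v : ℕ → Bool := fun x => decide (∃ δ ∈ S, w δ x = true)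
  have hv : ∀ δ ∈ S, satCNF δ v := fun δ hδ =>
    satCNF_mono (fun x hx => decide_eq_true ⟨δ, hδ, hx⟩) (hw δ hδ).1
  intro hS
  obtain ⟨x, hx, hvx⟩ := hS v hv Cl hCl
  obtain ⟨δ, hδ, hwx⟩ := of_decide_eq_true hvx
  simp [(hw δ hδ).2 x hx] at hwx

lemma not_entailsCNF_iff {S : Set (List (Finset ℕ))} {α : List (Finset ℕ)} :
    ¬ entailsCNF S α ↔ ∃ Cl ∈ α, ∀ δ ∈ S, ¬ entailsClause δ Cl :=
  ⟨exists_clause_of_not_entailsCNF, fun ⟨_, hCl, h⟩ =>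
    not_entailsCNF_of_forall_not_entailsClause hCl h⟩

lemma exists_entailsCNF_clauseSupport {Δ Φ : Finset (List (Finset ℕ))}
    {ψ α : List (Finset ℕ)} (hΦΔ : Φ ⊆ Δ) (hΦ : entailsCNF ↑Φ α)
    (hmin : ¬ entailsCNF ↑(Φ.erase ψ) α) :
    ∃ Cl ∈ α, entailsCNF (clauseSupport Δ ψ Cl) α := by
  obtain ⟨Cl, hCl, hnot⟩ := not_entailsCNF_iff.1 hmin
  refine ⟨Cl, hCl, hΦ.mono fun δ hδ => ?_⟩
  by_cases hδψ : δ = ψ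
  · exact Or.inl hδψ
  · exact Or.inr ⟨hΦΔ hδ, hnot δ (Finset.mem_erase.2 ⟨hδψ, hδ⟩)⟩

lemma exists_minimal_support_of_entailsCNF_clauseSupport {Δ : Finset (List (Finset ℕ))}
    {ψ α : List (Finset ℕ)} {Cl : Finset ℕ} (hψ : ψ ∈ Δ) (hCl : Cl ∈ α)
    (h : entailsCNF (clauseSupport Δ ψ Cl) α) :
    ∃ Φ : Finset (List (Finset ℕ)), Φ ⊆ Δ ∧ ψ ∈ Φ ∧ entailsCNF ↑Φ α ∧
      ∀ Φ' ⊂ Φ, ¬ entailsCNF ↑Φ' α := by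
  classical
  let T := insert ψ (Δ.filter fun δ => ¬ entailsClause δ Cl)
  have hT : entailsCNF ↑T α := h.mono fun δ hδ => by simpa [T, clauseSupport] using hδ
  obtain ⟨Φ, hΦT, hΦ⟩ :=
    exists_minimal_le_of_wellFoundedLT (fun Φ : Finset _ => entailsCNF ↑Φ α) T hT
  have hTΔ : T ⊆ Δ := Finset.insert_subset hψ (Finset.filter_subset _ _)
  have hψΦ : ψ ∈ Φ := by
    by_contra hψΦ
    refine not_entailsCNF_iff.2 ⟨Cl, hCl, fun δ hδ => ?_⟩ hΦ.prop
    have hδT := hΦT hδ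
    simp only [T, Finset.mem_insert, Finset.mem_filter] at hδT
    exact hδT.resolve_left (ne_of_mem_of_not_mem hδ hψΦ) |>.2
  exact ⟨Φ, hΦT.trans hTΔ, hψΦ, hΦ.prop, fun _ hlt => hΦ.not_prop_of_lt hlt⟩

theorem stmt9_general (Δ : Finset (List (Finset ℕ))) (ψ α : List (Finset ℕ))
    (hψ : ψ ∈ Δ)
    (hΔpos : ∀ δ ∈ Δ, ∀ c ∈ δ, c.Nonempty) :
    (∃ Φ : Finset (List (Finset ℕ)), Φ ⊆ Δ ∧ ψ ∈ Φ ∧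
        (∃ v : ℕ → Bool, ∀ δ ∈ Φ, satCNF δ v) ∧
        entailsCNF ↑Φ α ∧
        ∀ Φ' ⊂ Φ, ¬ entailsCNF ↑Φ' α)
    ↔ ∃ Cl ∈ α,
        entailsCNF
          ({ψ} ∪ {δ : List (Finset ℕ) | δ ∈ Δ ∧ ¬ ∀ v : ℕ → Bool, satCNF δ v → ∃ x ∈ Cl, v x = true})
          α := by
  constructor
  · rintro ⟨Φ, hΦΔ, hψΦ, -, hΦ, hmin⟩
    exact exists_entailsCNF_clauseSupport hΦΔ hΦ (hmin _ (Finset.erase_ssubset hψΦ))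
  · rintro ⟨Cl, hCl, h⟩
    obtain ⟨Φ, hΦΔ, hψΦ, hΦ, hmin⟩ :=
      exists_minimal_support_of_entailsCNF_clauseSupport hψ hCl h
    have hcons : ∀ δ ∈ Φ, satCNF δ fun _ => true := fun δ hδ =>
      satCNF_const_true (hΔpos δ (hΦΔ hδ))
    exact ⟨Φ, hΦΔ, hψΦ, ⟨_, hcons⟩, hΦ, hmin⟩

/-- There is a minimal support `Φ ⊆ Δ` for `α` with `ψ ∈ Φ` iff some clause `Cl` of `α`
is such that `Δ_Cl = {ψ} ∪ {δ ∈ Δ | δ ⊭ Cl}` entails `α`.  (Clauses are nonempty, being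
disjunctions of variables.) -/
theorem stmt9 (Δ : Finset (List (Finset ℕ))) (ψ α : List (Finset ℕ))
    (hψ : ψ ∈ Δ)
    (hΔpos : ∀ δ ∈ Δ, ∀ c ∈ δ, c.Nonempty) (hαpos : ∀ c ∈ α, c.Nonempty) :
    (∃ Φ : Finset (List (Finset ℕ)), Φ ⊆ Δ ∧ ψ ∈ Φ ∧
        (∃ v : ℕ → Bool, ∀ δ ∈ Φ, satCNF δ v) ∧
        entailsCNF ↑Φ α ∧
        ∀ Φ' ⊂ Φ, ¬ entailsCNF ↑Φ' α)
    ↔ ∃ Cl ∈ α,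
        entailsCNF
          ({ψ} ∪ {δ : List (Finset ℕ) | δ ∈ Δ ∧ ¬ ∀ v : ℕ → Bool, satCNF δ v → ∃ x ∈ Cl, v x = true})
          α :=
  stmt9_general Δ ψ α hψ hΔpos
end

section
/- For any finite set Φ of complementive formulae and complementive formula α (a formula being complementive if its set of models is closed under flipping all variable values) over a common variable set containing a distinguished variable f, Φ ⊨ α if and only if Φ[f/0] ⊨ α[f/0], where [f/0] denotes substituting 0 for f, and Φ is satisfiable iff Φ[f/0] is satisfiable. -/
inductive PropForm (α : Type) where
  | var : α → PropForm α
  | tru : PropForm α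
  | fls : PropForm α
  | not : PropForm α → PropForm α
  | and : PropForm α → PropForm α → PropForm α
  | or : PropForm α → PropForm α → PropForm α
  deriving DecidableEq

def PropForm.eval {α : Type} (v : α → Bool) : PropForm α → Bool
  | .var a => v a
  | .tru => true
  | .fls => false
  | .not φ => !(PropForm.eval v φ)
  | .and φ ψ => PropForm.eval v φ && PropForm.eval v ψ
  | .or φ ψ => PropForm.eval v φ || PropForm.eval v ψ

/-- `v` satisfies every formula in `Φ`. -/
def Models {α : Type} (Φ : Set (PropForm α)) (v : α → Bool) : Prop :=
  ∀ φ ∈ Φ, PropForm.eval v φ = true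

/-- `Φ` entails `ψ`. -/
def Entails {α : Type} (Φ : Set (PropForm α)) (ψ : PropForm α) : Prop :=
  ∀ v : α → Bool, Models Φ v → PropForm.eval v ψ = true

/-- `Φ` is consistent. -/
def Consistent {α : Type} (Φ : Set (PropForm α)) : Prop :=
  ∃ v : α → Bool, Models Φ v

/-- Conjunction of a list of formulae. -/
def bigAnd {α : Type} (L : List (PropForm α)) : PropForm α :=
  L.foldr PropForm.and PropForm.tru

/-- Substitution of the constant 0 (false) for the variable `f`. -/
def substF (f : ℕ) : PropForm ℕ → PropForm ℕ
  | .var a => if a = f then .fls else .var a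
  | .tru => .tru
  | .fls => .fls
  | .not φ => .not (substF f φ)
  | .and φ ψ => .and (substF f φ) (substF f ψ)
  | .or φ ψ => .or (substF f φ) (substF f ψ)

/-- A formula is complementive if its set of models is closed under flipping all
variable values. -/
def Complementive (φ : PropForm ℕ) : Prop :=
  ∀ v : ℕ → Bool, PropForm.eval (fun x => !(v x)) φ = PropForm.eval v φ

lemma substF_eval (f : ℕ) (v : ℕ → Bool) (φ : PropForm ℕ) :
    PropForm.eval v (substF f φ) = PropForm.eval (Function.update v f false) φ := by
  induction φ with
  | var a =>
    by_cases h : a = f <;> simp [substF, PropForm.eval, h, Function.update]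
  | tru => rfl
  | fls => rfl
  | not φ ih => simp [substF, PropForm.eval, ih]
  | and φ ψ ih1 ih2 => simp [substF, PropForm.eval, ih1, ih2]
  | or φ ψ ih1 ih2 => simp [substF, PropForm.eval, ih1, ih2]

lemma update_self_false (f : ℕ) (v : ℕ → Bool) (h : v f = false) :
    Function.update v f false = v := by
  funext x; by_cases hx : x = f <;> simp [Function.update, hx, h]

/-- For complementive `Φ` and `α`: `Φ ⊨ α` iff `Φ[f/0] ⊨ α[f/0]`, and `Φ` is
satisfiable iff `Φ[f/0]` is satisfiable. -/
theorem stmt12 (Φ : Finset (PropForm ℕ)) (α : PropForm ℕ) (f : ℕ)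
    (hΦ : ∀ φ ∈ Φ, Complementive φ) (hα : Complementive α) :
    (Entails ((Φ : Set (PropForm ℕ))) α ↔ Entails ((Φ.image (substF f) : Finset (PropForm ℕ)) : Set (PropForm ℕ)) (substF f α)) ∧
    (Consistent (((Φ : Set (PropForm ℕ))) : Set (PropForm ℕ)) ↔ Consistent ((Φ.image (substF f) : Finset (PropForm ℕ)) : Set (PropForm ℕ))) := by
  constructor
  · constructor
    · intro h v hv
      rw [substF_eval]
      apply h
      intro φ hφ
      rw [← substF_eval]
      exact hv _ (by simpa using Finset.mem_image_of_mem (substF f) hφ)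
    · intro h v hv
      by_cases hf : v f = false
      · have := h v ?_
        · rwa [substF_eval, update_self_false f v hf] at this
        · intro ψ hψ
          simp only [Finset.coe_image, Set.mem_image, Finset.mem_coe] at hψ
          obtain ⟨φ, hφ, rfl⟩ := hψ
          rw [substF_eval, update_self_false f v hf]
          exact hv φ hφ
      · set w : ℕ → Bool := fun x => !(v x) with hw
        have hwf : w f = false := by
          have : v f = true := by simpa using hf
          simp [hw, this]
        have hwm : Models (Φ : Set (PropForm ℕ)) w := by
          intro φ hφ
          rw [hw, hΦ φ (by simpa using hφ) v]
          exact hv φ hφ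
        have := h w ?_
        · rw [substF_eval, update_self_false f w hwf] at this
          rw [← hα v]; exact this
        · intro ψ hψ
          simp only [Finset.coe_image, Set.mem_image, Finset.mem_coe] at hψ
          obtain ⟨φ, hφ, rfl⟩ := hψ
          rw [substF_eval, update_self_false f w hwf]
          exact hwm φ (by simpa using hφ)
  · constructor
    · rintro ⟨v, hv⟩
      by_cases hf : v f = false
      · refine ⟨v, ?_⟩
        intro ψ hψ
        simp only [Finset.coe_image, Set.mem_image, Finset.mem_coe] at hψ
        obtain ⟨φ, hφ, rfl⟩ := hψ
        rw [substF_eval, update_self_false f v hf]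
        exact hv φ hφ
      · set w : ℕ → Bool := fun x => !(v x) with hw
        have hwf : w f = false := by
          have : v f = true := by simpa using hf
          simp [hw, this]
        refine ⟨w, ?_⟩
        intro ψ hψ
        simp only [Finset.coe_image, Set.mem_image, Finset.mem_coe] at hψ
        obtain ⟨φ, hφ, rfl⟩ := hψ
        rw [substF_eval, update_self_false f w hwf, hw, hΦ φ hφ v]
        exact hv φ (by simpa using hφ)
    · rintro ⟨v, hv⟩
      refine ⟨Function.update v f false, ?_⟩
      intro φ hφ
      rw [← substF_eval]
      exact hv _ (by simpa using Finset.mem_image_of_mem (substF f) hφ)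
end

section
/- Let φ = ⋀_{i=1}^k C_i be a 3-CNF formula with variables x_1,...,x_n, and let c_1,...,c_k, x'_1,...,x'_n, f be fresh variables. Define the knowledge base Δ consisting of: the formulae (x_j ≠ f) and (x'_j ≠ f) for each j; the single formula ⋀_{j=1}^n (x_j ≠ x'_j); and for each clause C_i and variable x_j, the formula (x_j ≠ c_i) if ¬x_j ∈ C_i and (x'_j ≠ c_i) if x_j ∈ C_i. Let α = ⋀_{i=1}^k (c_i ≠ f) ∧ ⋀_{j=1}^n (x_j ≠ x'_j). Then φ is satisfiable if and only if there exists a consistent subset Φ ⊆ Δ with Φ ⊨ α (equivalently, a minimal support for α in Δ exists). -/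
/-- Variables: `x j`, its companion `x' j` (written `x'`), clause variables `c i`, and `f`. -/
inductive V13 where
  | x : ℕ → V13
  | x' : ℕ → V13
  | c : ℕ → V13
  | f : V13
  deriving DecidableEq

/-- The disequality constraint `a ≠ b`. -/
def neq (a b : V13) : PropForm V13 :=
  .or (.and (.var a) (.not (.var b))) (.and (.not (.var a)) (.var b))

lemma eval_neq (v : V13 → Bool) (a b : V13) :
    (neq a b).eval v = true ↔ v a = !(v b) := by
  simp only [neq, PropForm.eval]
  cases v a <;> cases v b <;> simp

lemma eval_bigAnd (v : V13 → Bool) (L : List (PropForm V13)) :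
    (bigAnd L).eval v = true ↔ ∀ φ ∈ L, φ.eval v = true := by
  induction L with
  | nil => simp [bigAnd, PropForm.eval]
  | cons a t ih =>
      rw [show bigAnd (a::t) = PropForm.and a (bigAnd t) from rfl]
      simp [PropForm.eval, ih, List.forall_mem_cons]

/-- A 3-CNF formula `φ` with clauses `C i` (lists of at most 3 literals, a literal being a
variable index `< n` together with a polarity) is satisfiable iff the knowledge base `Δ`
of the reduction contains a consistent subset entailing `α`. -/
theorem stmt13 (k n : ℕ) (C : Fin k → List (ℕ × Bool))
    (hlen : ∀ i, (C i).length ≤ 3) (hvar : ∀ i, ∀ l ∈ C i, l.1 < n) :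
    (∃ σ : ℕ → Bool, ∀ i, ∃ l ∈ C i, σ l.1 = l.2)
    ↔ (∃ Φ : Set (PropForm V13),
        Φ ⊆ ({ψ | ∃ j < n, ψ = neq (V13.x j) V13.f ∨ ψ = neq (V13.x' j) V13.f}
             ∪ {bigAnd ((List.range n).map fun j => neq (V13.x j) (V13.x' j))}
             ∪ {ψ | ∃ i : Fin k, ∃ j : ℕ, (j, false) ∈ C i ∧ ψ = neq (V13.x j) (V13.c i.val)}
             ∪ {ψ | ∃ i : Fin k, ∃ j : ℕ, (j, true) ∈ C i ∧ ψ = neq (V13.x' j) (V13.c i.val)}) ∧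
        Consistent Φ ∧
        Entails Φ (bigAnd (((List.finRange k).map fun i => neq (V13.c i.val) V13.f)
                           ++ (List.range n).map fun j => neq (V13.x j) (V13.x' j)))) := by
  constructor
  · rintro ⟨σ, hσ⟩
    refine ⟨{ψ | ψ = bigAnd ((List.range n).map fun j => neq (V13.x j) (V13.x' j))
        ∨ (∃ j < n, (σ j = true ∧ ψ = neq (V13.x j) V13.f)
                  ∨ (σ j = false ∧ ψ = neq (V13.x' j) V13.f))
        ∨ (∃ i : Fin k, ∃ j : ℕ, (j, false) ∈ C i ∧ σ j = false
              ∧ ψ = neq (V13.x j) (V13.c i.val))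
        ∨ (∃ i : Fin k, ∃ j : ℕ, (j, true) ∈ C i ∧ σ j = true
              ∧ ψ = neq (V13.x' j) (V13.c i.val))}, ?_, ?_, ?_⟩
    · rintro ψ (rfl | ⟨j, hj, ⟨_, rfl⟩ | ⟨_, rfl⟩⟩ | ⟨i, j, hm, _, rfl⟩ | ⟨i, j, hm, _, rfl⟩)
      · exact Or.inl (Or.inl (Or.inr rfl))
      · exact Or.inl (Or.inl (Or.inl ⟨j, hj, Or.inl rfl⟩))
      · exact Or.inl (Or.inl (Or.inl ⟨j, hj, Or.inr rfl⟩))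
      · exact Or.inl (Or.inr ⟨i, j, hm, rfl⟩)
      · exact Or.inr ⟨i, j, hm, rfl⟩
    · refine ⟨fun w => match w with
        | V13.x j => σ j | V13.x' j => !(σ j) | V13.c _ => true | V13.f => false, ?_⟩
      rintro ψ (rfl | ⟨j, hj, ⟨hs, rfl⟩ | ⟨hs, rfl⟩⟩ | ⟨i, j, hm, hs, rfl⟩ | ⟨i, j, hm, hs, rfl⟩)
      · rw [eval_bigAnd]
        rintro φ hφ
        simp only [List.mem_map, List.mem_range] at hφ
        obtain ⟨j, hj, rfl⟩ := hφ
        rw [eval_neq]; simp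
      · rw [eval_neq]; simp [hs]
      · rw [eval_neq]; simp [hs]
      · rw [eval_neq]; simp [hs]
      · rw [eval_neq]; simp [hs]
    · intro v hv
      have hbig := hv _ (Or.inl rfl)
      rw [eval_bigAnd] at hbig
      have hx : ∀ j < n, v (V13.x j) = !(v (V13.x' j)) := by
        intro j hj
        rw [← eval_neq]
        exact hbig _ (List.mem_map.2 ⟨j, List.mem_range.2 hj, rfl⟩)
      rw [eval_bigAnd]
      intro φ hφ
      rw [List.mem_append] at hφ
      rcases hφ with hφ | hφ
      · simp only [List.mem_map] at hφ
        obtain ⟨i, -, rfl⟩ := hφ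
        obtain ⟨⟨j, b⟩, hm, hsl⟩ := hσ i
        have hjn : j < n := hvar _ _ hm
        rw [eval_neq]
        cases b with
        | true =>
            have h1 : v (V13.x' j) = !(v (V13.c i.val)) :=
              (eval_neq ..).1 (hv _ (Or.inr (Or.inr (Or.inr ⟨i, j, hm, hsl, rfl⟩))))
            have h2 : v (V13.x j) = !(v V13.f) :=
              (eval_neq ..).1 (hv _ (Or.inr (Or.inl ⟨j, hjn, Or.inl ⟨hsl, rfl⟩⟩)))
            have h3 := hx j hjn
            rw [h1] at h3
            rw [h2] at h3
            cases hc : v (V13.c i.val) <;> cases hf : v V13.f <;> simp [hc, hf] at h3 ⊢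
        | false =>
            have h1 : v (V13.x j) = !(v (V13.c i.val)) :=
              (eval_neq ..).1 (hv _ (Or.inr (Or.inr (Or.inl ⟨i, j, hm, hsl, rfl⟩))))
            have h2 : v (V13.x' j) = !(v V13.f) :=
              (eval_neq ..).1 (hv _ (Or.inr (Or.inl ⟨j, hjn, Or.inr ⟨hsl, rfl⟩⟩)))
            have h3 := hx j hjn
            rw [h1, h2] at h3
            cases hc : v (V13.c i.val) <;> cases hf : v V13.f <;> simp [hc, hf] at h3 ⊢
      · simp only [List.mem_map, List.mem_range] at hφ
        obtain ⟨j, hj, rfl⟩ := hφ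
        rw [eval_neq]
        exact hx j hj
  · rintro ⟨Φ, hsub, ⟨v, hv⟩, hent⟩
    have hα := hent v hv
    rw [eval_bigAnd] at hα
    have hx : ∀ j < n, v (V13.x j) = !(v (V13.x' j)) := by
      intro j hj
      rw [← eval_neq]
      exact hα _ (List.mem_append.2 (Or.inr (List.mem_map.2 ⟨j, List.mem_range.2 hj, rfl⟩)))
    refine ⟨fun j => v (V13.x j) != v V13.f, fun i => ?_⟩
    by_contra hno
    push_neg at hno
    set v' : V13 → Bool := fun w => if w = V13.c i.val then v V13.f else v w with hv'def
    have hv' : Models Φ v' := by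
      intro ψ hψ
      rcases hsub hψ with ((⟨j, hj, (rfl | rfl)⟩ | rfl) | ⟨i', j, hm, rfl⟩) | ⟨i', j, hm, rfl⟩
      · rw [eval_neq]
        have := (eval_neq ..).1 (hv _ hψ)
        simpa [hv'def] using this
      · rw [eval_neq]
        have := (eval_neq ..).1 (hv _ hψ)
        simpa [hv'def] using this
      · rw [eval_bigAnd]
        intro φ hφ
        have hb := (eval_bigAnd ..).1 (hv _ hψ) _ hφ
        simp only [List.mem_map, List.mem_range] at hφ
        obtain ⟨j, hj, rfl⟩ := hφ
        rw [eval_neq] at hb ⊢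
        simpa [hv'def] using hb
      · rw [eval_neq]
        by_cases hii : i' = i
        · subst hii
          have hns := hno (j, false) hm
          simp only [bne_eq_false_iff_eq, ne_eq, Bool.not_eq_false] at hns
          have h1 : v (V13.x j) ≠ v V13.f := by
            intro h; exact hns (by simp [h])
          simp only [hv'def]
          simp only [reduceIte]
          cases hxf : v (V13.x j) <;> cases hf : v V13.f <;>
            simp_all
        · have hcc : V13.c i'.val ≠ V13.c i.val := by
            simp only [ne_eq, V13.c.injEq]
            exact fun h => hii (Fin.ext h)
          have := (eval_neq ..).1 (hv _ hψ)
          simpa [hv'def, hcc] using this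
      · rw [eval_neq]
        by_cases hii : i' = i
        · subst hii
          have hns := hno (j, true) hm
          have hjn : j < n := hvar _ _ hm
          have hxx := hx j hjn
          have h1 : v (V13.x j) = v V13.f := by
            by_contra h
            exact hns (by simp only [bne_iff_ne, ne_eq]; exact h)
          simp only [hv'def]
          simp only [reduceIte]
          rw [h1] at hxx
          cases hf : v V13.f <;> simp_all
        · have hcc : V13.c i'.val ≠ V13.c i.val := by
            simp only [ne_eq, V13.c.injEq]
            exact fun h => hii (Fin.ext h)
          have := (eval_neq ..).1 (hv _ hψ)
          simpa [hv'def, hcc] using this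
    have hα' := hent v' hv'
    rw [eval_bigAnd] at hα'
    have hci := (eval_neq ..).1 (hα' _ (List.mem_append.2 (Or.inl
      (List.mem_map.2 ⟨i, List.mem_finRange i, rfl⟩))))
    simp [hv'def] at hci
end

section
/- Let φ = ⋀_{i=1}^k (x_i ∨ y_i ∨ z_i) be a conjunction of positive 3-clauses and let c_1,...,c_k, f be fresh variables. Define Δ to contain, for each i, the three formulae c_i ∧ x_i ∧ ¬y_i ∧ ¬z_i ∧ ¬f, c_i ∧ ¬x_i ∧ y_i ∧ ¬z_i ∧ ¬f, and c_i ∧ ¬x_i ∧ ¬y_i ∧ z_i ∧ ¬f, and let α = ⋀_{i=1}^k (c_i ∧ ¬f). Then there exists a truth assignment setting exactly one variable among {x_i, y_i, z_i} to true in each clause i if and only if there exists a consistent subset Φ ⊆ Δ with Φ ⊨ α. -/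
/-- Variables: the original variables, clause variables `c i`, and `f`. -/
inductive V14 where
  | orig : ℕ → V14
  | c : ℕ → V14
  | f : V14
  deriving DecidableEq

theorem bigAnd_eval {α : Type} (v : α → Bool) (L : List (PropForm α)) :
    (bigAnd L).eval v = true ↔ ∀ φ ∈ L, φ.eval v = true := by
  induction L with
  | nil => simp [bigAnd, PropForm.eval]
  | cons a t ih => simp [bigAnd, PropForm.eval] at ih ⊢; tauto

/-- The reduction from Positive-1-in-3-SAT: the formula `⋀ i, (X i ∨ Y i ∨ Z i)` has an
assignment setting exactly one variable per clause to true iff the knowledge base `Δ`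
contains a consistent subset entailing `α = ⋀ i, (c i ∧ ¬f)`. -/
theorem stmt14 (k : ℕ) (X Y Z : Fin k → ℕ) :
    (∃ σ : ℕ → Bool, ∀ i, (σ (X i)).toNat + (σ (Y i)).toNat + (σ (Z i)).toNat = 1)
    ↔ (∃ Φ : Set (PropForm V14),
        Φ ⊆ {ψ | ∃ i : Fin k,
               ψ = bigAnd [.var (V14.c i.val), .var (V14.orig (X i)),
                           .not (.var (V14.orig (Y i))), .not (.var (V14.orig (Z i))),
                           .not (.var V14.f)] ∨
               ψ = bigAnd [.var (V14.c i.val), .not (.var (V14.orig (X i))),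
                           .var (V14.orig (Y i)), .not (.var (V14.orig (Z i))),
                           .not (.var V14.f)] ∨
               ψ = bigAnd [.var (V14.c i.val), .not (.var (V14.orig (X i))),
                           .not (.var (V14.orig (Y i))), .var (V14.orig (Z i)),
                           .not (.var V14.f)]} ∧
        Consistent Φ ∧
        Entails Φ (bigAnd ((List.finRange k).map fun i =>
          PropForm.and (.var (V14.c i.val)) (.not (.var V14.f))))) := by
  constructor
  · rintro ⟨σ, hσ⟩
    set v : V14 → Bool := fun a => match a with
      | V14.orig n => σ n
      | V14.c _ => true
      | V14.f => false with hvdef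
    set F : Fin k → PropForm V14 := fun i =>
      if σ (X i) then
        bigAnd [.var (V14.c i.val), .var (V14.orig (X i)),
                .not (.var (V14.orig (Y i))), .not (.var (V14.orig (Z i))),
                .not (.var V14.f)]
      else if σ (Y i) then
        bigAnd [.var (V14.c i.val), .not (.var (V14.orig (X i))),
                .var (V14.orig (Y i)), .not (.var (V14.orig (Z i))),
                .not (.var V14.f)]
      else
        bigAnd [.var (V14.c i.val), .not (.var (V14.orig (X i))),
                .not (.var (V14.orig (Y i))), .var (V14.orig (Z i)),
                .not (.var V14.f)] with hFdef
    have hvF : ∀ i, (F i).eval v = true := by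
      intro i
      have h := hσ i
      rcases hx : σ (X i) with _ | _ <;> rcases hy : σ (Y i) with _ | _ <;>
        rcases hz : σ (Z i) with _ | _ <;>
        simp [hx, hy, hz] at h ⊢ <;>
        simp [hFdef, hx, hy, hz, bigAnd, PropForm.eval, hvdef]
    refine ⟨Set.range F, ?_, ⟨v, ?_⟩, ?_⟩
    · rintro ψ ⟨i, rfl⟩
      refine ⟨i, ?_⟩
      by_cases hx : σ (X i) = true
      · left; simp [hFdef, hx]
      · by_cases hy : σ (Y i) = true
        · right; left; simp [hFdef, hx, hy]
        · right; right; simp [hFdef, hx, hy]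
    · rintro ψ ⟨i, rfl⟩; exact hvF i
    · intro w hw
      rw [bigAnd_eval]
      simp only [List.mem_map, List.mem_finRange]
      rintro ψ ⟨i, _, rfl⟩
      have h := hw (F i) ⟨i, rfl⟩
      by_cases hx : σ (X i) = true
      · simp [hFdef, hx, bigAnd, PropForm.eval] at h ⊢; tauto
      · by_cases hy : σ (Y i) = true
        · simp [hFdef, hx, hy, bigAnd, PropForm.eval] at h ⊢; tauto
        · simp [hFdef, hx, hy, bigAnd, PropForm.eval] at h ⊢; tauto
  · rintro ⟨Φ, hsub, ⟨v, hv⟩, hent⟩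
    refine ⟨fun n => v (V14.orig n), ?_⟩
    intro i
    -- Φ must contain a formula of index i
    have hex : ∃ ψ ∈ Φ, ∃ j : Fin k, j.val = i.val ∧
        (ψ = bigAnd [.var (V14.c j.val), .var (V14.orig (X j)),
                     .not (.var (V14.orig (Y j))), .not (.var (V14.orig (Z j))),
                     .not (.var V14.f)] ∨
         ψ = bigAnd [.var (V14.c j.val), .not (.var (V14.orig (X j))),
                     .var (V14.orig (Y j)), .not (.var (V14.orig (Z j))),
                     .not (.var V14.f)] ∨
         ψ = bigAnd [.var (V14.c j.val), .not (.var (V14.orig (X j))),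
                     .not (.var (V14.orig (Y j))), .var (V14.orig (Z j)),
                     .not (.var V14.f)]) := by
      by_contra hnone
      push_neg at hnone
      set v' : V14 → Bool := fun a => if a = V14.c i.val then false else v a with hv'def
      have hv' : Models Φ v' := by
        intro ψ hψ
        obtain ⟨j, hj⟩ := hsub hψ
        have hji : j.val ≠ i.val := by
          intro hji
          have := hnone ψ hψ j hji
          tauto
        have hvc : v' (V14.c j.val) = v (V14.c j.val) := by
          simp [hv'def, hji]
        have horig : ∀ n, v' (V14.orig n) = v (V14.orig n) := by
          intro n; simp [hv'def]
        have hf : v' V14.f = v V14.f := by simp [hv'def]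
        have := hv ψ hψ
        rcases hj with rfl | rfl | rfl <;>
          simpa [bigAnd, PropForm.eval, hvc, horig, hf] using this
      have hcontra := hent v' hv'
      rw [bigAnd_eval] at hcontra
      have := hcontra (PropForm.and (.var (V14.c i.val)) (.not (.var V14.f)))
        (by simp only [List.mem_map, List.mem_finRange]; exact ⟨i, trivial, rfl⟩)
      simp [PropForm.eval, hv'def] at this
    obtain ⟨ψ, hψΦ, j, hji, hj⟩ := hex
    have hXj : X j = X i := by
      have : j = i := Fin.ext hji
      rw [this]
    have hYj : Y j = Y i := by
      have : j = i := Fin.ext hji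
      rw [this]
    have hZj : Z j = Z i := by
      have : j = i := Fin.ext hji
      rw [this]
    have hψ := hv ψ hψΦ
    rcases hj with rfl | rfl | rfl <;>
      simp [bigAnd, PropForm.eval, hXj, hYj, hZj] at hψ <;>
      simp [hψ.2.1, hψ.2.2.1, hψ.2.2.2.1]
end

section
/- Let φ = ⋀_{i=1}^k C_i be a CNF formula and let f, t be fresh variables. Define Φ = {C_i ∨ (f → t) : i = 1,...,k} and α = (f → t). Then (Φ, α) is an argument (Φ is consistent, Φ ⊨ α, and no proper subset of Φ entails α) if and only if φ is unsatisfiable but removing any single clause C_i from φ makes the remaining conjunction satisfiable. -/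
/-- The propositional formula corresponding to a clause given as a list of literals
(variable index together with polarity). -/
def clauseForm (L : List (ℕ × Bool)) : PropForm ℕ :=
  L.foldr (fun l acc => .or (if l.2 then .var l.1 else .not (.var l.1)) acc) .fls

/-- `(Φ, α)` is an argument: `Φ` is consistent, `Φ ⊨ α`, and no proper subset of `Φ`
entails `α`. -/
def IsArgument (Φ : Finset (PropForm ℕ)) (α : PropForm ℕ) : Prop :=
  Consistent (↑Φ : Set (PropForm ℕ)) ∧ Entails (↑Φ : Set (PropForm ℕ)) α ∧
    ∀ Φ' ⊂ Φ, ¬ Entails ((Φ' : Finset (PropForm ℕ)) : Set (PropForm ℕ)) α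

/-!
A valuation `v` with `v ⊭ α` satisfies `Cᵢ ∨ α` exactly when it satisfies `Cᵢ`, so `{Cᵢ ∨ α}ᵢ∈S ⊨ α`
iff `{Cᵢ}ᵢ∈S ⊨ α`. Since `f` and `t` are fresh, any valuation of the clauses extends to one with
`f = 1`, `t = 0`, hence `{Cᵢ}ᵢ∈S ⊨ (f → t)` iff the clauses indexed by `S` are unsatisfiable.
Taking `S` to be all indices gives `Φ ⊨ α` iff `φ` is unsatisfiable; since entailment is monotone,
minimality only has to be checked on the subsets `Φ \ {Cᵢ ∨ α}`, which correspond to `S = {j ≠ i}`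
because `i ↦ Cᵢ ∨ α` is injective.
-/

open Function

section Entailment

variable {α : Type}

theorem Entails.mono {Φ Ψ : Set (PropForm α)} {χ : PropForm α} (hΦΨ : Φ ⊆ Ψ)
    (hΦ : Entails Φ χ) : Entails Ψ χ :=
  fun v hv => hΦ v fun φ hφ => hv φ (hΦΨ hφ)

theorem entails_image_or_iff (Ψ : Set (PropForm α)) (χ : PropForm α) :
    Entails ((fun ψ => ψ.or χ) '' Ψ) χ ↔ Entails Ψ χ := by
  simp only [Entails, Models, Set.forall_mem_image, PropForm.eval, Bool.or_eq_true]
  refine forall_congr' fun v => ?_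
  by_cases hχ : χ.eval v = true <;> simp [hχ]

theorem forall_ssubset_not_entails_iff [DecidableEq α] (Φ : Finset (PropForm α))
    (χ : PropForm α) :
    (∀ Φ' ⊂ Φ, ¬ Entails (Φ' : Set (PropForm α)) χ) ↔
      ∀ φ ∈ Φ, ¬ Entails (Φ.erase φ : Set (PropForm α)) χ := by
  refine ⟨fun h φ hφ => h _ (Finset.erase_ssubset hφ), fun h Φ' hΦ' hent => ?_⟩
  obtain ⟨φ, hφ, hφΦ'⟩ := Finset.exists_of_ssubset hΦ'
  exact h φ hφ (hent.mono (by exact_mod_cast Finset.subset_erase.2 ⟨hΦ'.subset, hφΦ'⟩))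

end Entailment

section Clauses

def literalForm (l : ℕ × Bool) : PropForm ℕ :=
  if l.2 then .var l.1 else .not (.var l.1)

theorem clauseForm_nil : clauseForm [] = .fls := rfl

theorem clauseForm_cons (l : ℕ × Bool) (L : List (ℕ × Bool)) :
    clauseForm (l :: L) = .or (literalForm l) (clauseForm L) := rfl

theorem eval_literalForm (v : ℕ → Bool) (l : ℕ × Bool) :
    (literalForm l).eval v = true ↔ v l.1 = l.2 := by
  rcases l with ⟨n, _ | _⟩ <;> simp [literalForm, PropForm.eval]

theorem eval_clauseForm (v : ℕ → Bool) (L : List (ℕ × Bool)) :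
    (clauseForm L).eval v = true ↔ ∃ l ∈ L, v l.1 = l.2 := by
  induction L with
  | nil => simp [clauseForm_nil, PropForm.eval]
  | cons l L ih => simp [clauseForm_cons, PropForm.eval, eval_literalForm, ih]

theorem literalForm_injective : Injective literalForm := by
  rintro ⟨n, _ | _⟩ ⟨m, _ | _⟩ h <;> simp_all [literalForm]

theorem clauseForm_injective : Injective clauseForm := by
  intro L₁
  induction L₁ with
  | nil => rintro (_ | _) h <;> simp_all [clauseForm_nil, clauseForm_cons]
  | cons l L₁ ih =>
    rintro (_ | ⟨l', L₂⟩) h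
    · simp [clauseForm_nil, clauseForm_cons] at h
    · obtain ⟨hl, hL⟩ := PropForm.or.inj h
      rw [literalForm_injective hl, ih hL]

variable {ι : Type} (C : ι → List (ℕ × Bool))

theorem models_image_clauseForm_iff (S : Set ι) (v : ℕ → Bool) :
    Models ((fun i => clauseForm (C i)) '' S) v ↔ ∀ i ∈ S, ∃ l ∈ C i, v l.1 = l.2 := by
  simp only [Models, Set.forall_mem_image, eval_clauseForm]

theorem entails_imp_iff_not_exists_sat (S : Set ι) {f t : ℕ} (hft : f ≠ t)
    (hfresh : ∀ i ∈ S, ∀ l ∈ C i, l.1 ≠ f ∧ l.1 ≠ t) :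
    Entails ((fun i => clauseForm (C i)) '' S) (.or (.not (.var f)) (.var t)) ↔
      ¬ ∃ σ : ℕ → Bool, ∀ i ∈ S, ∃ l ∈ C i, σ l.1 = l.2 := by
  refine ⟨fun hent ⟨σ, hσ⟩ => ?_, fun hunsat v hv => (hunsat ⟨v, ?_⟩).elim⟩
  · set v := update (update σ f true) t false
    have hsat : ∀ i ∈ S, ∃ l ∈ C i, v l.1 = l.2 := fun i hi => by
      obtain ⟨l, hl, hσl⟩ := hσ i hi
      obtain ⟨hlf, hlt⟩ := hfresh i hi l hl
      exact ⟨l, hl, by simp [v, update_of_ne hlf, update_of_ne hlt, hσl]⟩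
    have := hent v ((models_image_clauseForm_iff C S v).2 hsat)
    simp [v, PropForm.eval, hft] at this
  · exact (models_image_clauseForm_iff C S v).1 hv

end Clauses

/-- With `Φ = {Cᵢ ∨ (f → t)}` and `α = (f → t)`, the pair `(Φ, α)` is an argument iff
`φ = ⋀ᵢ Cᵢ` is unsatisfiable but removing any single clause makes it satisfiable. -/
theorem stmt15 (k : ℕ) (C : Fin k → List (ℕ × Bool)) (f t : ℕ)
    (hft : f ≠ t) (hfresh : ∀ i, ∀ l ∈ C i, l.1 ≠ f ∧ l.1 ≠ t)
    (hinj : Function.Injective C) :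
    IsArgument
      (Finset.image
        (fun i => PropForm.or (clauseForm (C i)) (.or (.not (.var f)) (.var t)))
        (Finset.univ : Finset (Fin k)))
      (PropForm.or (.not (.var f)) (.var t))
    ↔ ((¬ ∃ σ : ℕ → Bool, ∀ i, ∃ l ∈ C i, σ l.1 = l.2) ∧
        ∀ i : Fin k, ∃ σ : ℕ → Bool, ∀ j, j ≠ i → ∃ l ∈ C j, σ l.1 = l.2) := by
  set α : PropForm ℕ := .or (.not (.var f)) (.var t)
  set F : Fin k → PropForm ℕ := fun i => .or (clauseForm (C i)) α
  have hF : Injective F := fun i j h => hinj (clauseForm_injective (PropForm.or.inj h).1)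
  have hentails : ∀ s : Finset (Fin k),
      Entails (s.image F : Set (PropForm ℕ)) α ↔ ¬ ∃ σ : ℕ → Bool, ∀ i ∈ s, ∃ l ∈ C i, σ l.1 = l.2 := by
    intro s
    rw [Finset.coe_image, ← Set.image_image (fun ψ : PropForm ℕ => ψ.or α), entails_image_or_iff,
      entails_imp_iff_not_exists_sat C _ hft fun i _ => hfresh i]
    rfl
  have hconsistent : Consistent (Finset.univ.image F : Set (PropForm ℕ)) :=
    ⟨fun _ => true, by simp [Models, F, α, PropForm.eval]⟩
  rw [IsArgument, forall_ssubset_not_entails_iff, Finset.forall_mem_image]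
  simp only [← Finset.image_erase hF, hentails, hconsistent, true_and, not_not,
    Finset.mem_univ, Finset.mem_erase, forall_const, and_true]
end

section
/- Let Γ be a finite set of Boolean relations and suppose every relation in Γ is both 0-valid and 1-valid. If some relation R ∈ Γ of arity k is nontrivial (R ≠ ∅, R ≠ {0,1}^k), then the binary equality relation is expressible as a conjunction of two constraints of the form R applied to variables from {x, y}: specifically, there exists a partition of the coordinates {1,...,k} into nonempty sets V_0, V_1 such that, writing M(x,y) for R with x substituted at positions V_0 and y at positions V_1, the formula M(x,y) ∧ M(y,x) has exactly {(0,0),(1,1)} as its set of models. -/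
/- Γ a finite set of Boolean relations (of varying arities), all 0-valid and 1-valid;
if `R ∈ Γ` of arity `k` is nontrivial, then the binary equality relation is expressible
as `M(x,y) ∧ M(y,x)` where `M` substitutes `x` at the positions `{i | p i = false}` and
`y` at the positions `{i | p i = true}`, for a partition of the coordinates into two
nonempty parts given by `p : Fin k → Bool`. -/
theorem stmt19 (Γ : Set (Σ k : ℕ, Set (Fin k → Bool))) (hfin : Γ.Finite)
    (hval : ∀ S ∈ Γ, (fun _ => false) ∈ S.2 ∧ (fun _ => true) ∈ S.2)
    {k : ℕ} (R : Set (Fin k → Bool))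
    (hmem : (⟨k, R⟩ : Σ k : ℕ, Set (Fin k → Bool)) ∈ Γ)
    (hne : R ≠ ∅) (hnu : R ≠ Set.univ) :
    ∃ p : Fin k → Bool, (∃ i, p i = false) ∧ (∃ i, p i = true) ∧
      ∀ a b : Bool,
        (((fun i => if p i then b else a) ∈ R) ∧ ((fun i => if p i then a else b) ∈ R))
          ↔ a = b := by
  obtain ⟨h0, h1⟩ := hval _ hmem
  have : ∃ m, m ∉ R := by
    by_contra h
    push_neg at h
    exact hnu (Set.eq_univ_of_forall h)
  obtain ⟨m, hm⟩ := this
  refine ⟨m, ?_, ?_, ?_⟩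
  · by_contra h
    push_neg at h
    simp only [Bool.not_eq_false] at h
    exact hm (by convert h1 using 1; funext i; exact h i)
  · by_contra h
    push_neg at h
    simp only [Bool.not_eq_true] at h
    exact hm (by convert h0 using 1; funext i; exact h i)
  · intro a b
    constructor
    · rintro ⟨hab, hba⟩
      by_contra hne'
      rcases Bool.eq_false_or_eq_true a with ha | ha <;>
        rcases Bool.eq_false_or_eq_true b with hb | hb <;>
        subst ha <;> subst hb <;> simp at hne' hab hba
      · exact hm hba
      · exact hm hab
    · rintro rfl
      cases a
      · exact ⟨by simpa using h0, by simpa using h0⟩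
      · exact ⟨by simpa using h1, by simpa using h1⟩
end
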